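/- Suppose Assumption A holds and let K ∈ ℕ. Say u = u₁⋯u_m ∈ 𝒰 is K-moderate if u_i ≤ K for every i ≤ m. Then, almost surely, for every t ∈ [0,∞) the set {u ∈ 𝒯_t : u is K-moderate} is finite. -/

import Mathlib

/-!
A Chernoff bound through Laplace transforms. By independence and identical distribution across
nodes, `E[e^{-m B(u)}] = ∏ₖ Lₘ(uₖ)`, where `Lₘ(a) = E[e^{-m B(a)}]` is the Laplace transform of
the birth time of the `a`-th child of the root. Summing over the `K`-moderate `u` therefore gives
a geometric series with ratio `sₘ = ∑_{a<K} Lₘ(a)`. As `m → ∞`,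
`Lₘ(a) → P(B(a) = 0) = ∏_{j≤a} P(X_j = 0)`, so Assumption A (iii) yields `sₘ < 1` for some `m`.
Then `∑ᵤ P(u is K-moderate, B(u) ≤ n) ≤ e^{mn} (1 - sₘ)⁻¹ < ∞`, and Borel–Cantelli concludes.
-/

open MeasureTheory ProbabilityTheory Filter
open scoped ENNReal

namespace CMJ

/-- Ulam–Harris labels, encoded as *reversed* addresses: `i :: u` is the `(i+1)`-th child
of `u`, so the Lean child index `i : ℕ` corresponds to the paper's child index `i + 1`,
and the Lean waiting time `X u j` corresponds to the paper's `X(u (j+1))`. -/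
abbrev Node : Type := List ℕ

variable {Ω : Type*} [MeasurableSpace Ω]

/-- Birth times: `birth X [] = 0` and
`birth X (i :: u) = birth X u + ∑_{j=0}^{i} X u j`. -/
noncomputable def birth (X : Node → ℕ → Ω → ℝ≥0∞) : Node → Ω → ℝ≥0∞
  | [] => fun _ => 0
  | i :: u => fun ω => birth X u ω + ∑ j ∈ Finset.range (i + 1), X u j ω

/-- The population born before time `t`: `𝒯_t = {u : B(u) ≤ t}`. -/
def tree (X : Node → ℕ → Ω → ℝ≥0∞) (t : ℝ≥0∞) (ω : Ω) : Set Node :=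
  {u | birth X u ω ≤ t}

/-- `τ_k = inf {t ≥ 0 : |𝒯_t| ≥ k}`. -/
noncomputable def tau (X : Node → ℕ → Ω → ℝ≥0∞) (k : ℕ) (ω : Ω) : ℝ≥0∞ :=
  sInf {t : ℝ≥0∞ | (k : ℕ∞) ≤ (tree X t ω).encard}

/-- The `n`-th jump tree `𝒯_{τ_n}`. -/
noncomputable def jumpTree (X : Node → ℕ → Ω → ℝ≥0∞) (n : ℕ) (ω : Ω) : Set Node :=
  tree X (tau X n ω) ω

/-- Out-degree (number of children) of `u` in the tree `T`. -/
noncomputable def deg (T : Set Node) (u : Node) : ℕ∞ :=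
  {i : ℕ | i :: u ∈ T}.encard

open scoped Classical in
/-- Out-degree with the convention `outdeg(u,T) = -∞` (i.e. `⊥`) if `u ∉ T`. -/
noncomputable def degB (T : Set Node) (u : Node) : WithBot ℕ∞ :=
  if u ∈ T then (deg T u : WithBot ℕ∞) else ⊥

/-- `u` attains the maximal out-degree in `T` (this expresses
`outdeg(u,T) = max_{v ∈ T} outdeg(v,T)` with the convention `outdeg(u,T) = -∞`
for `u ∉ T`). -/
def IsMaxDeg (T : Set Node) (u : Node) : Prop :=
  u ∈ T ∧ ∀ v ∈ T, deg T v ≤ deg T u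

/-- `u` is a persistent hub of the tree sequence `T` if it attains the maximal
out-degree for all but finitely many `n`. -/
def IsPersistentHub (T : ℕ → Set Node) (u : Node) : Prop :=
  ∀ᶠ n in atTop, IsMaxDeg (T n) u

end CMJ

open scoped Topology

namespace ENNReal

noncomputable def expNeg (x : ℝ≥0∞) : ℝ≥0∞ := (EReal.exp x)⁻¹

@[simp] lemma expNeg_zero : expNeg 0 = 1 := by simp [expNeg]

lemma expNeg_add (a b : ℝ≥0∞) : expNeg (a + b) = expNeg a * expNeg b := by
  simp only [expNeg, EReal.coe_ennreal_add, EReal.exp_add]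
  exact ENNReal.mul_inv (.inl (by simp)) (.inr (by simp))

lemma expNeg_sum {ι : Type*} (s : Finset ι) (f : ι → ℝ≥0∞) :
    expNeg (∑ i ∈ s, f i) = ∏ i ∈ s, expNeg (f i) :=
  map_prod (⟨⟨fun x : Multiplicative ℝ≥0∞ => expNeg x.toAdd, expNeg_zero⟩, expNeg_add⟩ :
    Multiplicative ℝ≥0∞ →* ℝ≥0∞) (fun i => Multiplicative.ofAdd (f i)) s

lemma expNeg_le_one (x : ℝ≥0∞) : expNeg x ≤ 1 := by
  simp [expNeg, EReal.coe_ennreal_nonneg]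

lemma expNeg_lt_one {x : ℝ≥0∞} (hx : x ≠ 0) : expNeg x < 1 := by
  simp [expNeg, pos_iff_ne_zero, hx]

lemma expNeg_ne_zero {x : ℝ≥0∞} (hx : x ≠ ∞) : expNeg x ≠ 0 := by
  simp [expNeg, hx]

lemma expNeg_antitone : Antitone expNeg := fun a b hab => by
  simp [expNeg, hab]

lemma measurable_expNeg : Measurable expNeg :=
  (EReal.measurable_exp.comp measurable_coe_ennreal_ereal).inv

lemma tendsto_expNeg_pow (x : ℝ≥0∞) :
    Tendsto (fun m : ℕ => expNeg x ^ m) atTop (𝓝 (if x = 0 then 1 else 0)) := by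
  split_ifs with hx
  · simp [hx]
  · exact tendsto_pow_atTop_nhds_zero_of_lt_one (expNeg_lt_one hx)

lemma tsum_fin_pi_prod {α : Type*} (b : α → ℝ≥0∞) (n : ℕ) :
    ∑' f : Fin n → α, ∏ i, b (f i) = (∑' a, b a) ^ n := by
  induction n with
  | zero => simp
  | succ n ih =>
    rw [← (Fin.consEquiv fun _ => α).tsum_eq, ENNReal.tsum_prod', pow_succ', ← ih,
      ← ENNReal.tsum_mul_right]
    simp [Fin.prod_univ_succ, ENNReal.tsum_mul_left]

lemma tsum_list_prod_map {α : Type*} (b : α → ℝ≥0∞) :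
    ∑' l : List α, (l.map b).prod = ∑' n : ℕ, (∑' a, b a) ^ n := by
  rw [← List.equivSigmaTuple.symm.tsum_eq, ENNReal.tsum_sigma']
  simp [List.equivSigmaTuple, List.map_ofFn, List.prod_ofFn, tsum_fin_pi_prod]

end ENNReal

namespace CMJ

open ENNReal

variable {Ω : Type*}

lemma birth_singleton (X : Node → ℕ → Ω → ℝ≥0∞) (a : ℕ) (ω : Ω) :
    birth X [a] ω = ∑ j ∈ Finset.range (a + 1), X [] j ω := by
  simp [birth]

lemma birth_eq_sum_ancestors (X : Node → ℕ → Ω → ℝ≥0∞) (u : Node) (ω : Ω) :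
    birth X u ω = ∑ k : Fin u.length, ∑ j ∈ Finset.range (u[k] + 1), X (u.drop (k + 1)) j ω := by
  induction u with
  | nil => simp [birth]
  | cons i u ih =>
    refine Eq.trans ?_ (Fin.sum_univ_succ (n := u.length) _).symm
    rw [add_comm]
    simp [birth, ih]

variable [MeasurableSpace Ω]

noncomputable def laplace (P : Measure Ω) (Y : Ω → ℝ≥0∞) (m : ℕ) : ℝ≥0∞ :=
  ∫⁻ ω, expNeg (Y ω) ^ m ∂P

lemma tendsto_laplace (P : Measure Ω) [IsFiniteMeasure P] {Y : Ω → ℝ≥0∞} (hY : Measurable Y) :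
    Tendsto (laplace P Y) atTop (𝓝 (P {ω | Y ω = 0})) := by
  have h := tendsto_lintegral_of_dominated_convergence (μ := P) (fun _ => 1)
    (fun m => (measurable_expNeg.comp hY).pow_const m)
    (fun m => ae_of_all _ fun _ => pow_le_one₀ zero_le (expNeg_le_one _))
    (by simp) (ae_of_all _ fun ω => tendsto_expNeg_pow (Y ω))
  have hlim : ∫⁻ ω, (if Y ω = 0 then 1 else 0) ∂P = P {ω | Y ω = 0} := by
    have hs : MeasurableSet {ω | Y ω = 0} := hY (measurableSet_singleton 0)
    rw [← lintegral_indicator_one hs]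
    congr with ω
    simp [Set.indicator_apply]
  rw [← hlim]
  exact h

lemma measure_le_le_laplace_div (P : Measure Ω) {Y : Ω → ℝ≥0∞} (hY : Measurable Y) {t : ℝ≥0∞}
    (ht : t ≠ ∞) (m : ℕ) :
    P {ω | Y ω ≤ t} ≤ laplace P Y m / expNeg t ^ m :=
  calc P {ω | Y ω ≤ t} ≤ P {ω | expNeg t ^ m ≤ expNeg (Y ω) ^ m} :=
        measure_mono fun _ hω => pow_le_pow_left₀ zero_le (expNeg_antitone hω) m
    _ ≤ laplace P Y m / expNeg t ^ m :=
        meas_ge_le_lintegral_div ((measurable_expNeg.comp hY).pow_const m).aemeasurable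
          (pow_ne_zero _ (expNeg_ne_zero ht))
          (pow_ne_top ((expNeg_le_one t).trans_lt one_lt_top).ne)

section Birth

variable (X : Node → ℕ → Ω → ℝ≥0∞)

lemma measurable_birth (hmeas : ∀ u j, Measurable (X u j)) (u : Node) :
    Measurable (birth X u) := by
  induction u with
  | nil => exact measurable_const
  | cons i u ih => exact ih.add (Finset.measurable_sum _ fun j _ => hmeas u j)

lemma laplace_birth (P : Measure Ω) (hmeas : ∀ u j, Measurable (X u j))
    (hnodes_indep : iIndepFun (fun u ω (j : ℕ) => X u j ω) P)
    (hnodes_ident : ∀ u : Node,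
      Measure.map (fun ω (j : ℕ) => X u j ω) P = Measure.map (fun ω (j : ℕ) => X [] j ω) P)
    (m : ℕ) (u : Node) :
    laplace P (birth X u) m = (u.map fun a => laplace P (birth X [a]) m).prod := by
  -- `S a (X v ·)` is `e^{-m T}`, `T` the time from the birth of `v` to that of its child `a`
  set S : ℕ → (ℕ → ℝ≥0∞) → ℝ≥0∞ := fun a x => expNeg (∑ j ∈ Finset.range (a + 1), x j) ^ m
  have hS : ∀ a, Measurable (S a) := fun a =>
    (measurable_expNeg.comp (Finset.measurable_sum _ fun j _ => measurable_pi_apply j)).pow_const m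
  have hX : ∀ v, Measurable fun ω (j : ℕ) => X v j ω := fun v => measurable_pi_lambda _ (hmeas v)
  have hident : ∀ v a, ∫⁻ ω, S a (fun j => X v j ω) ∂P = laplace P (birth X [a]) m := by
    intro v a
    rw [← lintegral_map (hS a) (hX v), hnodes_ident v, lintegral_map (hS a) (hX [])]
    simp [S, laplace, birth_singleton]
  have hinj : Function.Injective fun k : Fin u.length => u.drop (k + 1) := by
    intro k k' h
    have := congrArg List.length h
    simp only [List.length_drop] at this
    omega
  have hindep : iIndepFun (fun (k : Fin u.length) ω => S u[k] fun j => X (u.drop (k + 1)) j ω) P :=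
    (hnodes_indep.precomp hinj).comp (fun k => S u[k]) fun k => hS _
  calc laplace P (birth X u) m
      = ∫⁻ ω, ∏ k : Fin u.length, S u[k] (fun j => X (u.drop (k + 1)) j ω) ∂P := by
        simp only [laplace, birth_eq_sum_ancestors, expNeg_sum, Finset.prod_pow, S]
    _ = ∏ k : Fin u.length, ∫⁻ ω, S u[k] (fun j => X (u.drop (k + 1)) j ω) ∂P :=
        lintegral_prod_eq_prod_lintegral_of_indepFun _ _ hindep
          fun k => (hS u[k]).comp (hX (u.drop (k + 1)))
    _ = (u.map fun a => laplace P (birth X [a]) m).prod := by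
        simp only [hident]
        exact Fin.prod_univ_fun_getElem u fun a => laplace P (birth X [a]) m

lemma measure_birth_singleton_zero_eq_prod (P : Measure Ω) (hA1 : iIndepFun (fun j => X [] j) P)
    (a : ℕ) :
    P {ω | birth X [a] ω = 0} = ∏ j ∈ Finset.range (a + 1), P {ω | X [] j ω = 0} := by
  have : {ω | birth X [a] ω = 0} = ⋂ j ∈ Finset.range (a + 1), X [] j ⁻¹' {0} := by
    ext ω
    simp [birth_singleton, Finset.sum_eq_zero_iff]
  rw [this, hA1.measure_inter_preimage_eq_mul _ fun _ _ => measurableSet_singleton 0]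
  rfl

end Birth

lemma tsum_measure_moderate_birth_le_ne_top (P : Measure Ω)
    (X : Node → ℕ → Ω → ℝ≥0∞) (hmeas : ∀ u j, Measurable (X u j))
    (hnodes_indep : iIndepFun (fun u ω (j : ℕ) => X u j ω) P)
    (hnodes_ident : ∀ u : Node,
      Measure.map (fun ω (j : ℕ) => X u j ω) P = Measure.map (fun ω (j : ℕ) => X [] j ω) P)
    {K m : ℕ} (hm : ∑ a ∈ Finset.range K, laplace P (birth X [a]) m < 1)
    {t : ℝ≥0∞} (ht : t ≠ ∞) :
    ∑' u : Node, P {ω | (∀ i ∈ u, i + 1 ≤ K) ∧ birth X u ω ≤ t} ≠ ∞ := by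
  -- restricting `laplace` to `a < K` turns the sum over all nodes into one over moderate nodes
  set β : ℕ → ℝ≥0∞ := (Finset.range K : Set ℕ).indicator fun a => laplace P (birth X [a]) m
  have hle : ∀ u : Node,
      P {ω | (∀ i ∈ u, i + 1 ≤ K) ∧ birth X u ω ≤ t} ≤ (u.map β).prod / expNeg t ^ m := by
    intro u
    by_cases hu : ∀ i ∈ u, i + 1 ≤ K
    · have hβ : (u.map β).prod = laplace P (birth X u) m := by
        rw [laplace_birth X P hmeas hnodes_indep hnodes_ident]
        congr 1
        refine List.map_congr_left fun a ha => ?_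
        simp [β, Nat.lt_iff_add_one_le, hu a ha]
      rw [hβ]
      exact (measure_mono fun _ h => h.2).trans (measure_le_le_laplace_div P
        (measurable_birth X hmeas u) ht m)
    · simp only [hu, false_and, Set.ofPred_false, measure_empty, zero_le]
  refine ne_top_of_le_ne_top ?_ (ENNReal.tsum_le_tsum hle)
  simp only [div_eq_mul_inv, ENNReal.tsum_mul_right, tsum_list_prod_map, ← sum_eq_tsum_indicator,
    β, ENNReal.tsum_geometric]
  exact mul_ne_top (inv_ne_top.2 (tsub_pos_iff_lt.2 hm).ne')
    (inv_ne_top.2 (pow_ne_zero _ (expNeg_ne_zero ht)))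

theorem moderate_finite_general
    (P : Measure Ω) [IsProbabilityMeasure P]
    (X : Node → ℕ → Ω → ℝ≥0∞)
    (hmeas : ∀ u j, Measurable (X u j))
    -- the sequences `(X(u ·))_u` are i.i.d. across nodes
    (hnodes_indep : iIndepFun
      (fun u ω (j : ℕ) => X u j ω) P)
    (hnodes_ident : ∀ u : Node,
      Measure.map (fun ω (j : ℕ) => X u j ω) P = Measure.map (fun ω (j : ℕ) => X [] j ω) P)
    -- Assumption A (i): the waiting times `X_j` are mutually independent
    (hA1 : iIndepFun (fun j => X [] j) P)
    -- Assumption A (iii): `∑_{j=1}^∞ ∏_{i=1}^{j} P(X_i = 0) < 1`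
    (hA3 : ∑' j : ℕ, ∏ i ∈ Finset.range (j + 1), P {ω | X [] i ω = 0} < 1)
    (K : ℕ) :
    ∀ᵐ ω ∂P, ∀ t : ℝ≥0∞, t < ⊤ →
      {u : Node | u ∈ tree X t ω ∧ ∀ i ∈ u, i + 1 ≤ K}.Finite := by
  have hzero : ∑ a ∈ Finset.range K, P {ω | birth X [a] ω = 0} < 1 := by
    simp only [measure_birth_singleton_zero_eq_prod X P hA1]
    exact (ENNReal.sum_le_tsum _).trans_lt hA3
  obtain ⟨m, hm⟩ := ((tendsto_finsetSum _ fun a _ =>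
    tendsto_laplace P (measurable_birth X hmeas [a])).eventually_lt_const hzero).exists
  have hfin : ∀ n : ℕ, ∀ᵐ ω ∂P, {u : Node | (∀ i ∈ u, i + 1 ≤ K) ∧ birth X u ω ≤ n}.Finite :=
    fun n => ae_finite_setOfPred_mem
      (tsum_measure_moderate_birth_le_ne_top P X hmeas hnodes_indep hnodes_ident hm
        (natCast_ne_top n))
  filter_upwards [ae_all_iff.2 hfin] with ω hω t ht
  obtain ⟨n, hn⟩ := ENNReal.exists_nat_gt ht.ne
  exact (hω n).subset fun u hu => ⟨hu.2, hu.1.trans hn.le⟩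

/-- under Assumption A, for any `K`, almost surely, for every finite time
`t` the set of `K`-moderate individuals born before time `t` is finite. (An individual
`u` is `K`-moderate if all of its (paper, i.e. `1`-based) coordinates are at most `K`;
in the reversed `0`-based encoding this reads `i + 1 ≤ K` for every entry `i` of `u`.) -/
theorem moderate_finite
    (P : Measure Ω) [IsProbabilityMeasure P]
    (X : Node → ℕ → Ω → ℝ≥0∞)
    (hmeas : ∀ u j, Measurable (X u j))
    -- the sequences `(X(u ·))_u` are i.i.d. across nodes
    (hnodes_indep : iIndepFun
      (fun u ω (j : ℕ) => X u j ω) P)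
    (hnodes_ident : ∀ u : Node,
      Measure.map (fun ω (j : ℕ) => X u j ω) P = Measure.map (fun ω (j : ℕ) => X [] j ω) P)
    -- Assumption A (i): the waiting times `X_j` are mutually independent
    (hA1 : iIndepFun (fun j => X [] j) P)
    -- Assumption A (ii): `X_j < ∞` almost surely
    (hA2 : ∀ j : ℕ, ∀ᵐ ω ∂P, X [] j ω < ⊤)
    -- Assumption A (iii): `∑_{j=1}^∞ ∏_{i=1}^{j} P(X_i = 0) < 1`
    (hA3 : ∑' j : ℕ, ∏ i ∈ Finset.range (j + 1), P {ω | X [] i ω = 0} < 1)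
    (K : ℕ) (hK : 1 ≤ K) :
    ∀ᵐ ω ∂P, ∀ t : ℝ≥0∞, t < ⊤ →
      {u : Node | u ∈ tree X t ω ∧ ∀ i ∈ u, i + 1 ≤ K}.Finite :=
  moderate_finite_general P X hmeas hnodes_indep hnodes_ident hA1 hA3 K

end CMJ
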